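/- arXiv:2303.01964 — 2 statements merged into one kernel-verified Lean document; each statement's English description precedes it below -/
import Mathlib

section
/- Let G be a graph of order n with minimum degree δ ≤ n-2, and let G_{n,δ} be the graph obtained from K_{n-1} by adding one vertex adjacent to exactly δ vertices of K_{n-1}. If G is not isomorphic to G_{n,δ}, then N(G) < N(G_{n,δ}). -/
open SimpleGraph

/-- Number of nonempty vertex subsets inducing a connected subgraph. -/
noncomputable def numConnSub {V : Type*} [Fintype V] (G : SimpleGraph V) : ℕ :=
  Set.ncard {S : Set V | S.Nonempty ∧ (G.induce S).Connected}

/-- Number of vertex subsets containing `u` inducing a connected subgraph. -/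
noncomputable def numConnSubAt {V : Type*} [Fintype V] (G : SimpleGraph V) (u : V) : ℕ :=
  Set.ncard {S : Set V | u ∈ S ∧ (G.induce S).Connected}

/-- The graph `G_{n,x}` with `n = m + 1`: a complete graph on `Fin m` together with an extra
vertex `none` adjacent to exactly `x` of its vertices. -/
def Gnd (m x : ℕ) : SimpleGraph (Option (Fin m)) :=
  SimpleGraph.fromRel (fun a b =>
    match a, b with
    | some _, some _ => True
    | none, some i => i.val < x
    | some i, none => i.val < x
    | none, none => False)

/-!
Count the complement: the nonempty vertex sets inducing a disconnected subgraph. Let `u` be a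
vertex of minimum degree `δ` and `B` the `n - 1 - δ` vertices other than `u` not adjacent to it.
Each of the `2 ^ (n - 1 - δ) - 1` sets `insert u T` with `∅ ≠ T ⊆ B` is disconnected, `u` being
isolated in it, and when `V \ {u}` is a clique (as in `G_{n,δ}`) there are no other disconnected
sets. A graph `G` with `G - u` complete is `G_{n,δ}`; otherwise a non-adjacent pair `{x, y}` away
from `u` is one more disconnected set, so `G` has strictly fewer connected ones.
-/

lemma Set.ncard_setOf_subset_nonempty {α : Type*} (B : Set α) (hB : B.Finite := by toFinite_tac) :
    {T | T ⊆ B ∧ T.Nonempty}.ncard = 2 ^ B.ncard - 1 := by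
  have h : {T : Set α | T ⊆ B ∧ T.Nonempty} = 𝒫 B \ {∅} := by
    ext T; simp [Set.nonempty_iff_ne_empty]
  rw [h, Set.ncard_sdiff_singleton_of_mem (Set.empty_subset B), Set.ncard_powerset B hB]

lemma Set.ncard_image_insert_setOf_subset_nonempty {α : Type*} {B : Set α} {u : α} (hu : u ∉ B)
    (hB : B.Finite := by toFinite_tac) :
    (insert u '' {T | T ⊆ B ∧ T.Nonempty}).ncard = 2 ^ B.ncard - 1 := by
  have hinj : {T : Set α | T ⊆ B ∧ T.Nonempty}.InjOn (insert u) := fun T₁ h₁ T₂ h₂ h => by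
    rw [← Set.insert_sdiff_self_of_notMem (fun h' => hu (h₁.1 h')),
      ← Set.insert_sdiff_self_of_notMem (fun h' => hu (h₂.1 h')), h]
  rw [hinj.ncard_image, Set.ncard_setOf_subset_nonempty B hB]

namespace SimpleGraph

variable {V : Type*} {G : SimpleGraph V} {S : Set V}

lemma induce_connected_of_forall_adj {a : V} (ha : a ∈ S) (hadj : ∀ b ∈ S, b ≠ a → G.Adj a b) :
    (G.induce S).Connected := by
  have reach : ∀ v : S, (G.induce S).Reachable ⟨a, ha⟩ v := by
    rintro ⟨v, hv⟩
    by_cases hva : v = a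
    · subst hva; rfl
    · exact Adj.reachable (by simpa using hadj v hv hva)
  exact (connected_iff _).mpr ⟨fun v w => (reach v).symm.trans (reach w), ⟨⟨a, ha⟩⟩⟩

lemma IsClique.induce_connected (hS : G.IsClique S) (hne : S.Nonempty) :
    (G.induce S).Connected :=
  induce_connected_of_forall_adj hne.some_mem fun _ hb hba => hS hne.some_mem hb hba.symm

lemma exists_adj_of_induce_connected (hS : (G.induce S).Connected) (hnt : S.Nontrivial) {u : V}
    (hu : u ∈ S) : ∃ v ∈ S, G.Adj u v := by
  have : Nontrivial S := Set.nontrivial_coe_sort.mpr hnt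
  obtain ⟨v, hv⟩ := hS.preconnected.exists_adj_of_nontrivial ⟨u, hu⟩
  exact ⟨v, v.2, by simpa using hv⟩

lemma not_induce_connected_insert {u : V} {T : Set V}
    (hT : T ⊆ (insert u (G.neighborSet u))ᶜ) (hne : T.Nonempty) :
    ¬(G.induce (insert u T)).Connected := by
  intro h
  obtain ⟨t, ht⟩ := hne
  have htu : t ≠ u := fun h => hT ht (Or.inl h)
  obtain ⟨v, hv, hadj⟩ := exists_adj_of_induce_connected h
    (Set.nontrivial_of_mem_mem_ne (Set.mem_insert u T) (Set.mem_insert_of_mem u ht) htu.symm)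
    (Set.mem_insert u T)
  rcases hv with rfl | hv
  · exact hadj.ne rfl
  · exact hT hv (Or.inr hadj)

end SimpleGraph

section Counting

variable {V : Type*} [Fintype V]

noncomputable def numDisconnSub (G : SimpleGraph V) : ℕ :=
  Set.ncard {S : Set V | S.Nonempty ∧ ¬(G.induce S).Connected}

lemma numConnSub_add_numDisconnSub (G : SimpleGraph V) :
    numConnSub G + numDisconnSub G = 2 ^ Fintype.card V - 1 := by
  have hdisj : Disjoint {S : Set V | S.Nonempty ∧ (G.induce S).Connected}
      {S | S.Nonempty ∧ ¬(G.induce S).Connected} :=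
    Set.disjoint_left.mpr fun _ h h' => h'.2 h.2
  have hunion : {S : Set V | S.Nonempty ∧ (G.induce S).Connected} ∪
      {S | S.Nonempty ∧ ¬(G.induce S).Connected} = {T | T ⊆ Set.univ ∧ T.Nonempty} := by
    ext S; by_cases h : (G.induce S).Connected <;> simp [h]
  rw [numConnSub, numDisconnSub, ← Set.ncard_union_eq hdisj, hunion,
    Set.ncard_setOf_subset_nonempty, Set.ncard_univ, Nat.card_eq_fintype_card]

lemma numConnSub_pos [Nonempty V] (G : SimpleGraph V) : 0 < numConnSub G := by
  obtain ⟨v⟩ := ‹Nonempty V›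
  exact (Set.ncard_pos).mpr ⟨{v}, Set.singleton_nonempty v,
    (isClique_singleton v).induce_connected (Set.singleton_nonempty v)⟩

lemma ncard_compl_insert_neighborSet (G : SimpleGraph V) [DecidableRel G.Adj] (u : V) :
    (insert u (G.neighborSet u))ᶜ.ncard = Fintype.card V - 1 - G.degree u := by
  rw [Set.ncard_compl, Set.ncard_insert_of_notMem (G.notMem_neighborSet_self),
    Set.ncard_eq_toFinset_card', Set.toFinset_card, card_neighborSet_eq_degree,
    Nat.card_eq_fintype_card]
  omega

end Counting

section Bounds

variable {V : Type*} [Fintype V] {G : SimpleGraph V} [DecidableRel G.Adj] {u : V}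

lemma numDisconnSub_lt_two_pow_of_isClique (hcl : G.IsClique {u}ᶜ) :
    numDisconnSub G < 2 ^ (Fintype.card V - 1 - G.degree u) := by
  set B := (insert u (G.neighborSet u))ᶜ
  have hsub : {S : Set V | S.Nonempty ∧ ¬(G.induce S).Connected} ⊆
      insert u '' {T | T ⊆ B ∧ T.Nonempty} := by
    rintro S ⟨hne, hS⟩
    have huS : u ∈ S := by
      by_contra huS
      exact hS ((hcl.subset fun v hv (hvu : v = u) => huS (hvu ▸ hv)).induce_connected hne)
    have hB : S \ {u} ⊆ B := by
      rintro v ⟨hv, hvu⟩ (rfl | hadj)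
      · exact hvu rfl
      · refine hS (induce_connected_of_forall_adj hv fun b hb hbv => ?_)
        by_cases hbu : b = u
        · exact hbu ▸ hadj.symm
        · exact hcl hvu hbu hbv.symm
    have hnt : (S \ {u}).Nonempty := by
      by_contra h
      have hSu : S ⊆ {u} := Set.sdiff_eq_empty.mp (Set.not_nonempty_iff_eq_empty.mp h)
      exact hS ((IsClique.of_subsingleton (Set.subsingleton_singleton.anti hSu)).induce_connected
        hne)
    exact ⟨S \ {u}, ⟨hB, hnt⟩, by rw [Set.insert_sdiff_singleton, Set.insert_eq_of_mem huS]⟩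
  calc numDisconnSub G ≤ (insert u '' {T | T ⊆ B ∧ T.Nonempty}).ncard := Set.ncard_le_ncard hsub
    _ = 2 ^ B.ncard - 1 := Set.ncard_image_insert_setOf_subset_nonempty fun h => h (Or.inl rfl)
    _ < 2 ^ B.ncard := Nat.sub_lt (Nat.two_pow_pos _) one_pos
    _ = _ := by rw [ncard_compl_insert_neighborSet]

lemma two_pow_le_numDisconnSub {x y : V} (hx : x ≠ u) (hy : y ≠ u) (hxy : x ≠ y)
    (hnadj : ¬G.Adj x y) : 2 ^ (Fintype.card V - 1 - G.degree u) ≤ numDisconnSub G := by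
  set B := (insert u (G.neighborSet u))ᶜ
  have hsub : insert {x, y} (insert u '' {T | T ⊆ B ∧ T.Nonempty}) ⊆
      {S : Set V | S.Nonempty ∧ ¬(G.induce S).Connected} := by
    rintro S (rfl | ⟨T, ⟨hTB, hT⟩, rfl⟩)
    · refine ⟨Set.insert_nonempty x {y}, fun h => ?_⟩
      obtain ⟨v, hv, hadj⟩ := exists_adj_of_induce_connected h
        (Set.nontrivial_of_mem_mem_ne (Set.mem_insert x _) (Set.mem_insert_of_mem x rfl) hxy)
        (Set.mem_insert x _)
      rcases hv with rfl | rfl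
      · exact hadj.ne rfl
      · exact hnadj hadj
    · exact ⟨Set.insert_nonempty u T, not_induce_connected_insert hTB hT⟩
  have hxyF : {x, y} ∉ insert u '' {T | T ⊆ B ∧ T.Nonempty} := by
    rintro ⟨T, -, hT⟩
    rcases (hT ▸ Set.mem_insert u T : u ∈ ({x, y} : Set V)) with h | h
    · exact hx h.symm
    · exact hy (Set.mem_singleton_iff.mp h).symm
  calc 2 ^ (Fintype.card V - 1 - G.degree u) = 2 ^ B.ncard - 1 + 1 := by
        rw [ncard_compl_insert_neighborSet, Nat.sub_add_cancel Nat.one_le_two_pow]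
    _ = (insert {x, y} (insert u '' {T | T ⊆ B ∧ T.Nonempty})).ncard := by
        rw [Set.ncard_insert_of_notMem hxyF,
          Set.ncard_image_insert_setOf_subset_nonempty fun h : u ∈ B => h (Or.inl rfl)]
    _ ≤ numDisconnSub G := Set.ncard_le_ncard hsub

end Bounds

section Gnd

variable {m x : ℕ}

@[simp] lemma Gnd_adj_some_some {i j : Fin m} : (Gnd m x).Adj (some i) (some j) ↔ i ≠ j := by
  simp [Gnd]

@[simp] lemma Gnd_adj_none_some {j : Fin m} : (Gnd m x).Adj none (some j) ↔ j.val < x := by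
  simp [Gnd]

@[simp] lemma Gnd_adj_some_none {i : Fin m} : (Gnd m x).Adj (some i) none ↔ i.val < x := by
  simp [Gnd]

lemma Gnd_isClique : (Gnd m x).IsClique {none}ᶜ := by
  rintro (_ | i) hi (_ | j) hj hij
  · exact absurd rfl hi
  · exact absurd rfl hi
  · exact absurd rfl hj
  · simpa using hij

lemma Gnd_degree_none [DecidableRel (Gnd m x).Adj] (h : x ≤ m) : (Gnd m x).degree none = x := by
  have : (Gnd m x).neighborFinset none =
      ({i : Fin m | i.val < x} : Finset (Fin m)).map Function.Embedding.some := by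
    ext (_ | j) <;> simp
  rw [← card_neighborFinset_eq_degree, this, Finset.card_map, Fin.card_filter_val_lt,
    min_eq_right h]

end Gnd

lemma exists_equiv_fin_iff_lt {α : Type*} [Fintype α] (p : α → Prop) [DecidablePred p] {m k : ℕ}
    (hm : Fintype.card α = m) (hk : Fintype.card {a // p a} = k) :
    ∃ e : α ≃ Fin m, ∀ a, p a ↔ (e a : ℕ) < k := by
  have hkm : k ≤ m := hm ▸ hk ▸ Fintype.card_subtype_le p
  let e₁ : {a // p a} ≃ {i : Fin m // i < k} :=
    Fintype.equivOfCardEq (hk.trans (Fintype.card_fin_lt_of_le hkm).symm)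
  let e₂ : {a // ¬p a} ≃ {i : Fin m // ¬i < k} := Fintype.equivOfCardEq (by
    rw [Fintype.card_subtype_compl, Fintype.card_subtype_compl, hm, hk, Fintype.card_fin,
      Fintype.card_fin_lt_of_le hkm])
  refine ⟨(Equiv.sumCompl p).symm.trans ((e₁.sumCongr e₂).trans (Equiv.sumCompl _)), fun a => ?_⟩
  by_cases h : p a
  · simpa [Equiv.sumCompl_symm_apply_of_pos h, h] using (e₁ ⟨a, h⟩).2
  · simpa [Equiv.sumCompl_symm_apply_of_neg h, h] using (e₂ ⟨a, h⟩).2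

namespace SimpleGraph

variable {V : Type*} [Fintype V] {G : SimpleGraph V} [DecidableRel G.Adj]

lemma nonempty_iso_Gnd_of_isClique {u : V} (hcl : G.IsClique {u}ᶜ) :
    Nonempty (G ≃g Gnd (Fintype.card V - 1) (G.degree u)) := by
  classical
  obtain ⟨e, he⟩ := exists_equiv_fin_iff_lt (fun w : {w // w ≠ u} => G.Adj u w)
    (Set.card_ne_eq u) ((Fintype.card_congr
      (Equiv.subtypeSubtypeEquivSubtype fun h => (G.ne_of_adj h).symm)).trans
      (G.card_neighborSet_eq_degree u))
  let f : Option (Fin (Fintype.card V - 1)) ≃ V :=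
    (Equiv.optionCongr e.symm).trans (Equiv.optionSubtypeNe u)
  refine ⟨Iso.symm ⟨f, fun {a b} => ?_⟩⟩
  rcases a with _ | i <;> rcases b with _ | j <;>
    simp only [f, Equiv.trans_apply, Equiv.optionCongr_apply, Option.map_none, Option.map_some,
      Equiv.optionSubtypeNe_none, Equiv.optionSubtypeNe_some, Gnd_adj_some_some,
      Gnd_adj_none_some, Gnd_adj_some_none]
  · simp
  · exact he (e.symm j) |>.trans (by simp)
  · exact G.adj_comm _ _ |>.trans <| he (e.symm i) |>.trans (by simp)
  · exact ⟨fun h hij => h.ne (by rw [hij]),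
      fun hij => hcl (e.symm i).2 (e.symm j).2 fun h => hij (e.symm.injective (Subtype.ext h))⟩

end SimpleGraph

theorem numConnSub_lt_of_minDegree_general {V : Type*} [Fintype V] (G : SimpleGraph V)
    [DecidableRel G.Adj] (n δ : ℕ) (hn : Fintype.card V = n) (hδ : G.minDegree = δ)
    (hiso : IsEmpty (G ≃g Gnd (n - 1) δ)) :
    numConnSub G < numConnSub (Gnd (n - 1) δ) := by
  classical
  subst hn
  have hsumGnd := numConnSub_add_numDisconnSub (Gnd (Fintype.card V - 1) δ)
  rcases isEmpty_or_nonempty V with hV | hV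
  -- `Gnd (0 - 1) δ` still has the vertex `none`
  · have hsumG := numConnSub_add_numDisconnSub G
    rw [Fintype.card_eq_zero] at hsumG
    exact (show numConnSub G = 0 by omega) ▸ numConnSub_pos _
  obtain ⟨u, hu⟩ := G.exists_minimal_degree_vertex
  have hdeg : G.degree u = δ := hu ▸ hδ
  subst hdeg
  by_cases hcl : G.IsClique {u}ᶜ
  · exact hiso.elim (nonempty_iso_Gnd_of_isClique hcl).some
  obtain ⟨x, hx, y, hy, hxy, hnadj⟩ : ∃ x, x ≠ u ∧ ∃ y, y ≠ u ∧ x ≠ y ∧ ¬G.Adj x y := by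
    simpa [IsClique, Set.Pairwise] using hcl
  have hG := two_pow_le_numDisconnSub hx hy hxy hnadj
  have hGnd := numDisconnSub_lt_two_pow_of_isClique
    (Gnd_isClique (m := Fintype.card V - 1) (x := G.degree u))
  rw [Gnd_degree_none (by have := G.degree_lt_card_verts u; omega)] at hGnd
  have hsumG := numConnSub_add_numDisconnSub G
  rw [Fintype.card_option, Fintype.card_fin, Nat.sub_add_cancel Fintype.card_pos] at hsumGnd hGnd
  omega

/-- Among graphs of order `n` and minimum degree `δ ≤ n - 2`, the graph `G_{n,δ}` is the
unique maximiser of the number of connected induced subgraphs. -/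
theorem numConnSub_lt_of_minDegree {V : Type*} [Fintype V] (G : SimpleGraph V)
    [DecidableRel G.Adj] (n δ : ℕ) (hn : Fintype.card V = n) (hδ : G.minDegree = δ)
    (hδn : δ ≤ n - 2) (hiso : IsEmpty (G ≃g Gnd (n - 1) δ)) :
    numConnSub G < numConnSub (Gnd (n - 1) δ) :=
  numConnSub_lt_of_minDegree_general G n δ hn hδ hiso
end

section
/- Let G be a graph of order n with vertex connectivity c ≤ n-2, and let G_{n,c} be the graph obtained from K_{n-1} by adding one vertex adjacent to exactly c vertices of K_{n-1}. If G is not isomorphic to G_{n,c}, then N(G) < N(G_{n,c}). -/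
open SimpleGraph

/-- The vertex connectivity: the minimum size of a vertex set whose removal disconnects `G`. -/
noncomputable def vertConn {V : Type*} [Fintype V] (G : SimpleGraph V) : ℕ :=
  sInf {k | ∃ s : Finset V, s.card = k ∧ ¬ (G.induce ((↑s : Set V)ᶜ)).Connected}

/-! Write `D(G)` for the number of nonempty vertex sets inducing a disconnected subgraph, so that
`N(G) + D(G) = 2ⁿ - 1` and the claim becomes `D(G) > D(G_{n,c})`. In `G_{n,c}` a disconnected set
must contain the special vertex and avoid its neighbours, whence `D(G_{n,c}) ≤ 2^(n-1-c) - 1`.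
In `G`, a separator of size `c` splits the other `n - c` vertices into sides `A`, `B` with no
edges between them, and each of the `(2^|A| - 1)(2^|B| - 1)` sets inside `A ∪ B` meeting both
sides is disconnected. This is at least `2^(n-1-c)` when both sides have two vertices. If a side is
a single vertex `x`, it is one short, and the missing disconnected set exists unless `x` is
adjacent to the whole separator and all other pairs are adjacent, i.e. unless `G ≅ G_{n,c}`. -/

open Set

lemma Nat.two_pow_add_sub_one_le_mul {a b : ℕ} (ha : 2 ≤ a) (hb : 2 ≤ b) :
    2 ^ (a + b - 1) ≤ (2 ^ a - 1) * (2 ^ b - 1) := by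
  obtain ⟨a, rfl⟩ := Nat.exists_eq_add_of_le' ha
  obtain ⟨b, rfl⟩ := Nat.exists_eq_add_of_le' hb
  have hX := Nat.one_le_two_pow (n := a)
  have hY := Nat.one_le_two_pow (n := b)
  rw [show a + 2 + (b + 2) - 1 = a + b + 3 by omega, pow_add, pow_add, pow_add, pow_add]
  zify [show 1 ≤ 2 ^ a * 2 ^ 2 by omega, show 1 ≤ 2 ^ b * 2 ^ 2 by omega]
  nlinarith

lemma Fintype.exists_equiv_fin_val_lt_iff {α : Type*} [Fintype α] (p : α → Prop)
    [DecidablePred p] {m c : ℕ} (hm : Fintype.card α = m) (hc : Fintype.card {a // p a} = c) :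
    ∃ f : α ≃ Fin m, ∀ a, p a ↔ (f a).val < c := by
  subst hm hc
  have hcard : Fintype.card {a // p a} + Fintype.card {a // ¬ p a} = Fintype.card α := by
    rw [← Fintype.card_sum, Fintype.card_congr (Equiv.sumCompl p)]
  refine ⟨(Equiv.sumCompl p).symm.trans ((Equiv.sumCongr (Fintype.equivFin _)
    (Fintype.equivFin _)).trans (finSumFinEquiv.trans (finCongr hcard))), fun a => ?_⟩
  by_cases ha : p a
  · simp [Equiv.sumCompl_symm_apply_of_pos ha, ha]
  · simp [Equiv.sumCompl_symm_apply_of_neg ha, ha]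

lemma Set.ncard_powerset_sdiff_empty {α : Type*} [Finite α] (C : Set α) :
    (𝒫 C \ {∅}).ncard = 2 ^ C.ncard - 1 := by
  rw [ncard_sdiff_singleton_of_mem (empty_subset C), ncard_powerset]

def crossingSets {α : Type*} (A B : Set α) : Set (Set α) :=
  {T | T ⊆ A ∪ B ∧ (T ∩ A).Nonempty ∧ (T ∩ B).Nonempty}

lemma ncard_crossingSets {α : Type*} [Finite α] {A B : Set α} (hAB : Disjoint A B) :
    (crossingSets A B).ncard = (2 ^ A.ncard - 1) * (2 ^ B.ncard - 1) := by
  have hsplit : ∀ {P Q}, P ⊆ A → Q ⊆ B → (P ∪ Q) ∩ A = P ∧ (P ∪ Q) ∩ B = Q := fun hP hQ =>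
    ⟨by rw [union_inter_distrib_right, inter_eq_left.2 hP,
          (hAB.symm.mono_left hQ).inter_eq, union_empty],
     by rw [union_inter_distrib_right, inter_eq_left.2 hQ,
          (hAB.mono_left hP).inter_eq, empty_union]⟩
  rw [← ncard_powerset_sdiff_empty, ← ncard_powerset_sdiff_empty, ← ncard_prod]
  refine (ncard_congr (fun P _ => P.1 ∪ P.2) ?_ ?_ ?_).symm
  · rintro ⟨P, Q⟩ ⟨⟨hPA, hP⟩, ⟨hQB, hQ⟩⟩
    refine ⟨union_subset_union hPA hQB, ?_, ?_⟩
    · rwa [(hsplit hPA hQB).1, nonempty_iff_ne_empty]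
    · rwa [(hsplit hPA hQB).2, nonempty_iff_ne_empty]
  · rintro ⟨P, Q⟩ ⟨P', Q'⟩ ⟨⟨hPA, -⟩, ⟨hQB, -⟩⟩ ⟨⟨hPA', -⟩, ⟨hQB', -⟩⟩ h
    have hPQ := hsplit hPA hQB
    have hPQ' := hsplit hPA' hQB'
    rw [show P ∪ Q = P' ∪ Q' from h] at hPQ
    exact Prod.ext (hPQ.1.symm.trans hPQ'.1) (hPQ.2.symm.trans hPQ'.2)
  · rintro T ⟨hT, hTA, hTB⟩
    refine ⟨(T ∩ A, T ∩ B), ⟨⟨inter_subset_right, hTA.ne_empty⟩, ⟨inter_subset_right,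
      hTB.ne_empty⟩⟩, ?_⟩
    rw [← inter_union_distrib_left, inter_eq_left.2 hT]

namespace SimpleGraph

variable {V : Type*} {G : SimpleGraph V}

def disconnectedSets (G : SimpleGraph V) : Set (Set V) :=
  {S | S.Nonempty ∧ ¬ (G.induce S).Connected}

lemma numConnSub_add_ncard_disconnectedSets [Fintype V] (G : SimpleGraph V) :
    numConnSub G + G.disconnectedSets.ncard = 2 ^ Fintype.card V - 1 := by
  have hne : {S : Set V | S.Nonempty} = 𝒫 univ \ {∅} := by
    ext S
    simp [nonempty_iff_ne_empty]
  rw [← Nat.card_eq_fintype_card, ← ncard_univ, ← ncard_powerset_sdiff_empty, ← hne]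
  exact ncard_inter_add_ncard_sdiff_eq_ncard _ {S : Set V | (G.induce S).Connected}

lemma induce_connected_of_forall_adj_s10 {S : Set V} {v : V} (hv : v ∈ S)
    (hadj : ∀ w ∈ S, w ≠ v → G.Adj v w) : (G.induce S).Connected := by
  rw [connected_iff_exists_forall_reachable]
  refine ⟨⟨v, hv⟩, fun ⟨w, hw⟩ => ?_⟩
  by_cases hwv : w = v
  · subst hwv; rfl
  · exact Adj.reachable (by simpa using hadj w hw hwv)

lemma exists_separation_of_not_connected_induce {K : Set V} (hK : K.Nonempty)
    (h : ¬ (G.induce K).Connected) :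
    ∃ A B : Set V, A ∪ B = K ∧ Disjoint A B ∧ A.Nonempty ∧ B.Nonempty ∧
      ∀ a ∈ A, ∀ b ∈ B, ¬ G.Adj a b := by
  have : Nonempty K := hK.to_subtype
  obtain ⟨u, v, huv⟩ : ∃ u v : K, ¬ (G.induce K).Reachable u v := by
    simpa [connected_iff, Preconnected] using h
  set A : Set V := {w | ∃ hw : w ∈ K, (G.induce K).Reachable u ⟨w, hw⟩}
  have hAK : A ⊆ K := fun w hw => hw.1
  refine ⟨A, K \ A, union_sdiff_cancel hAK, disjoint_sdiff_right, ⟨u, u.2, Reachable.refl _⟩,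
    ⟨v, v.2, fun ⟨_, hv⟩ => huv hv⟩, ?_⟩
  rintro a ⟨haK, hua⟩ b ⟨hbK, hbA⟩ hab
  exact hbA ⟨hbK, hua.trans (Adj.reachable (by simpa using hab))⟩

lemma crossingSets_subset_disconnectedSets {A B : Set V} (hAB : Disjoint A B)
    (hno : ∀ a ∈ A, ∀ b ∈ B, ¬ G.Adj a b) : crossingSets A B ⊆ G.disconnectedSets := by
  rintro T ⟨hTAB, ⟨p, hpT, hpA⟩, ⟨q, hqT, hqB⟩⟩
  refine ⟨⟨p, hpT⟩, fun hconn => ?_⟩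
  obtain ⟨w⟩ := hconn.preconnected ⟨p, hpT⟩ ⟨q, hqT⟩
  obtain ⟨d, -, hfst, hsnd⟩ :=
    w.exists_boundary_dart {u | u.1 ∈ A} hpA (disjoint_right.1 hAB hqB)
  have hB : d.snd.1 ∈ B := (hTAB d.snd.2).resolve_left hsnd
  exact hno _ hfst _ hB (by simpa using d.adj)

lemma pair_mem_disconnectedSets {v w : V} (hvw : v ≠ w) (h : ¬ G.Adj v w) :
    {v, w} ∈ G.disconnectedSets :=
  crossingSets_subset_disconnectedSets (disjoint_singleton.2 hvw) (by simpa using h)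
    ⟨by rintro _ (rfl | rfl) <;> simp, by simp, by simp⟩

end SimpleGraph

namespace Gnd

variable {m x : ℕ}

@[simp] lemma adj_some_some {i j : Fin m} : (Gnd m x).Adj (some i) (some j) ↔ i ≠ j := by
  simp [Gnd]

@[simp] lemma adj_none_some {i : Fin m} : (Gnd m x).Adj none (some i) ↔ i.val < x := by
  simp [Gnd]

@[simp] lemma adj_some_none {i : Fin m} : (Gnd m x).Adj (some i) none ↔ i.val < x := by
  simp [Gnd]

lemma ncard_some_val_ge : (some '' {i : Fin m | x ≤ i.val}).ncard = m - x := by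
  classical
  have hcompl : {i : Fin m | x ≤ i.val} = ↑(Finset.univ.filter fun i : Fin m => i.val < x)ᶜ := by
    ext
    simp
  rw [ncard_image_of_injective _ (Option.some_injective _), hcompl, ncard_coe_finset,
    Finset.card_compl, Fin.card_filter_val_lt, Fintype.card_fin]
  omega

lemma none_mem_of_mem_disconnectedSets {S : Set (Option (Fin m))}
    (hS : S ∈ (Gnd m x).disconnectedSets) : none ∈ S := by
  obtain ⟨⟨_ | i, hi⟩, hdisc⟩ := hS
  · exact hi
  by_contra hn
  refine hdisc (induce_connected_of_forall_adj_s10 hi ?_)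
  rintro (_ | j) hj hji
  · exact absurd hj hn
  · simpa [eq_comm] using hji

lemma sdiff_none_mem_of_mem_disconnectedSets {S : Set (Option (Fin m))}
    (hS : S ∈ (Gnd m x).disconnectedSets) :
    S \ {none} ∈ 𝒫 (some '' {i : Fin m | x ≤ i.val}) \ {∅} := by
  have hnone := none_mem_of_mem_disconnectedSets hS
  obtain ⟨-, hdisc⟩ := hS
  refine ⟨?_, fun hempty => ?_⟩
  · rintro (_ | i) ⟨hi, hne⟩
    · exact absurd rfl hne
    refine ⟨i, (not_lt.1 fun hlt => hdisc (induce_connected_of_forall_adj_s10 hi ?_) : x ≤ i.val), rfl⟩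
    rintro (_ | j) - hji
    · simpa using hlt
    · simpa [eq_comm] using hji
  · refine hdisc (induce_connected_of_forall_adj_s10 hnone fun w hw hwn => ?_)
    have hw' : w ∈ S \ {none} := ⟨hw, hwn⟩
    rw [mem_singleton_iff.1 hempty] at hw'
    exact hw'.elim

lemma ncard_disconnectedSets_le (m x : ℕ) :
    (Gnd m x).disconnectedSets.ncard ≤ 2 ^ (m - x) - 1 :=
  calc (Gnd m x).disconnectedSets.ncard
      ≤ (𝒫 (some '' {i : Fin m | x ≤ i.val}) \ {∅}).ncard := by
        refine ncard_le_ncard_of_injOn (· \ {none})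
          (fun S hS => sdiff_none_mem_of_mem_disconnectedSets hS) fun S hS T hT h => ?_
        simpa [insert_sdiff_singleton, insert_eq_of_mem (none_mem_of_mem_disconnectedSets hS),
          insert_eq_of_mem (none_mem_of_mem_disconnectedSets hT)] using congrArg (insert none) h
    _ = 2 ^ (m - x) - 1 := by rw [ncard_powerset_sdiff_empty, ncard_some_val_ge]

lemma nonempty_iso {V : Type*} [Fintype V] {G : SimpleGraph V} {x : V} {s : Finset V}
    (hx : ∀ v, G.Adj x v ↔ v ∈ s) (hcomplete : ∀ v w, v ≠ x → w ≠ x → v ≠ w → G.Adj v w) :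
    Nonempty (G ≃g Gnd (Fintype.card V - 1) s.card) := by
  classical
  have hxs : x ∉ s := fun h => G.irrefl ((hx x).2 h)
  obtain ⟨f, hf⟩ := Fintype.exists_equiv_fin_val_lt_iff (fun v : {v // v ≠ x} => v.1 ∈ s)
    (m := Fintype.card V - 1) (by rw [Fintype.card_subtype_compl, Fintype.card_subtype_eq])
    (by rw [Fintype.card_congr (Equiv.subtypeSubtypeEquivSubtype
      (fun h => ne_of_mem_of_not_mem h hxs)), Fintype.card_coe])
  let e : Option (Fin (Fintype.card V - 1)) ≃ V :=
    (Equiv.optionCongr f.symm).trans (Equiv.optionSubtypeNe x)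
  have he_none : e none = x := rfl
  have he_some : ∀ j, e (some j) = (f.symm j).1 := fun _ => rfl
  refine ⟨(⟨e, ?_⟩ : Gnd _ _ ≃g G).symm⟩
  rintro (_ | i) (_ | j)
  · simp [he_none]
  · rw [he_none, he_some, hx, hf, Equiv.apply_symm_apply, adj_none_some]
  · rw [he_none, he_some, G.adj_comm, hx, hf, Equiv.apply_symm_apply, adj_some_none]
  · rw [he_some, he_some, adj_some_some]
    refine ⟨fun h hij => G.ne_of_adj h (by rw [hij]), fun hij => ?_⟩
    exact hcomplete _ _ (f.symm i).2 (f.symm j).2 (fun h => hij (f.symm.injective (Subtype.ext h)))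

end Gnd

namespace SimpleGraph

variable {V : Type*} [Fintype V] {G : SimpleGraph V}

lemma exists_mem_disconnectedSets_notMem_crossingSets {s : Finset V} {x : V} (hxs : x ∉ s)
    (hx : ∀ v ∉ s, ¬ G.Adj x v) (hiso : IsEmpty (G ≃g Gnd (Fintype.card V - 1) s.card)) :
    ∃ E ∈ G.disconnectedSets, E ∉ crossingSets {x} ((↑s : Set V)ᶜ \ {x}) := by
  by_contra! h
  refine hiso.false (Gnd.nonempty_iso (x := x) (fun v => ⟨fun hv => ?_, fun hv => ?_⟩)
    fun v w hv hw hvw => ?_).some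
  · by_contra hvs
    exact hx v hvs hv
  · by_contra hxv
    have hxv' : x ≠ v := fun h => hxs (h ▸ hv)
    obtain ⟨hsub, -, -⟩ := h _ (pair_mem_disconnectedSets hxv' hxv)
    rcases hsub (mem_insert_of_mem x rfl) with hvx | hvs
    · exact hxv' hvx.symm
    · exact hvs.1 hv
  · by_contra hvw'
    obtain ⟨-, ⟨u, hu, rfl⟩, -⟩ := h _ (pair_mem_disconnectedSets hvw hvw')
    rcases hu with rfl | rfl
    · exact hv rfl
    · exact hw rfl

lemma two_pow_le_ncard_disconnectedSets_of_isolated {s : Finset V} {x : V} (hxs : x ∉ s)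
    (hx : ∀ v ∉ s, ¬ G.Adj x v) (hiso : IsEmpty (G ≃g Gnd (Fintype.card V - 1) s.card)) :
    2 ^ (Fintype.card V - 1 - s.card) ≤ G.disconnectedSets.ncard := by
  set B : Set V := (↑s : Set V)ᶜ \ {x}
  obtain ⟨E, hE, hEB⟩ := exists_mem_disconnectedSets_notMem_crossingSets hxs hx hiso
  have hdisj : Disjoint {x} B := disjoint_singleton_left.2 fun h => h.2 rfl
  have hsub : insert E (crossingSets {x} B) ⊆ G.disconnectedSets :=
    insert_subset hE (crossingSets_subset_disconnectedSets hdisj fun _ ha b hb =>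
      ha ▸ hx b hb.1)
  have hB : B.ncard = Fintype.card V - 1 - s.card := by
    rw [ncard_sdiff_singleton_of_mem (by simpa using hxs), ncard_compl, ncard_coe_finset,
      Nat.card_eq_fintype_card]
    omega
  have hpos := Nat.one_le_two_pow (n := B.ncard)
  calc 2 ^ (Fintype.card V - 1 - s.card) = (crossingSets {x} B).ncard + 1 := by
        rw [ncard_crossingSets hdisj, ncard_singleton, hB] at *
        omega
    _ = (insert E (crossingSets {x} B)).ncard := (ncard_insert_of_notMem hEB).symm
    _ ≤ G.disconnectedSets.ncard := ncard_le_ncard hsub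

lemma two_pow_le_ncard_disconnectedSets {s : Finset V} (hK : ((↑s : Set V)ᶜ).Nonempty)
    (hs : ¬ (G.induce (↑s : Set V)ᶜ).Connected)
    (hiso : IsEmpty (G ≃g Gnd (Fintype.card V - 1) s.card)) :
    2 ^ (Fintype.card V - 1 - s.card) ≤ G.disconnectedSets.ncard := by
  obtain ⟨A, B, hABs, hAB, hA, hB, hno⟩ := exists_separation_of_not_connected_induce hK hs
  have of_singleton : ∀ {P Q : Set V} {x : V}, P ∪ Q = (↑s : Set V)ᶜ →
      (∀ a ∈ P, ∀ b ∈ Q, ¬ G.Adj a b) → P = {x} →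
      2 ^ (Fintype.card V - 1 - s.card) ≤ G.disconnectedSets.ncard := by
    rintro P Q x hPQ hno rfl
    have hxs : x ∉ s := by simpa using hPQ.subset (mem_union_left Q rfl)
    refine two_pow_le_ncard_disconnectedSets_of_isolated hxs (fun v hv hxv => ?_) hiso
    rcases hPQ.symm.subset (show v ∈ (↑s : Set V)ᶜ by simpa using hv) with rfl | hvQ
    · exact G.irrefl hxv
    · exact hno x rfl v hvQ hxv
  by_cases hA1 : A.ncard = 1
  · obtain ⟨x, rfl⟩ := ncard_eq_one.1 hA1
    exact of_singleton hABs hno rfl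
  by_cases hB1 : B.ncard = 1
  · obtain ⟨x, rfl⟩ := ncard_eq_one.1 hB1
    exact of_singleton (by rwa [union_comm]) (fun b hb a ha h => hno a ha b hb h.symm) rfl
  have hcard : A.ncard + B.ncard = Fintype.card V - s.card := by
    rw [← ncard_union_eq hAB, hABs, ncard_compl, ncard_coe_finset, Nat.card_eq_fintype_card]
  have hA0 := (ncard_pos).2 hA
  have hB0 := (ncard_pos).2 hB
  calc 2 ^ (Fintype.card V - 1 - s.card) = 2 ^ (A.ncard + B.ncard - 1) := by
        rw [hcard, Nat.sub_right_comm]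
    _ ≤ (2 ^ A.ncard - 1) * (2 ^ B.ncard - 1) :=
        Nat.two_pow_add_sub_one_le_mul (by omega) (by omega)
    _ = (crossingSets A B).ncard := (ncard_crossingSets hAB).symm
    _ ≤ G.disconnectedSets.ncard := ncard_le_ncard (crossingSets_subset_disconnectedSets hAB hno)

lemma exists_finset_card_eq_vertConn (G : SimpleGraph V) :
    ∃ s : Finset V, s.card = vertConn G ∧ ¬ (G.induce (↑s : Set V)ᶜ).Connected := by
  refine Nat.sInf_mem (s := {k | ∃ s : Finset V, s.card = k ∧
    ¬ (G.induce (↑s : Set V)ᶜ).Connected}) ⟨Fintype.card V, Finset.univ, Finset.card_univ, fun h => ?_⟩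
  obtain ⟨⟨v, hv⟩⟩ := h.nonempty
  simp at hv

end SimpleGraph

/-- Among graphs of order `n` with vertex connectivity `c ≤ n - 2`, `G_{n,c}` is the unique
maximiser of the number of connected induced subgraphs. -/
theorem numConnSub_lt_of_vertConn {V : Type*} [Fintype V] (G : SimpleGraph V)
    (n c : ℕ) (hn : Fintype.card V = n) (hc : vertConn G = c) (hcn : c ≤ n - 2)
    (hiso : IsEmpty (G ≃g Gnd (n - 1) c)) :
    numConnSub G < numConnSub (Gnd (n - 1) c) := by
  have hG := numConnSub_add_ncard_disconnectedSets G
  have hH := numConnSub_add_ncard_disconnectedSets (Gnd (n - 1) c)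
  have hHD := Gnd.ncard_disconnectedSets_le (n - 1) c
  rw [hn] at hG
  rw [Fintype.card_option, Fintype.card_fin] at hH
  obtain rfl | hn0 := Nat.eq_zero_or_pos n
  · -- `c ≤ n - 2` holds by truncation when `n = 0`; then `G` has no nonempty vertex set at all
    norm_num at hG hH hHD
    omega
  obtain ⟨s, hsc, hs⟩ := G.exists_finset_card_eq_vertConn
  rw [hc] at hsc
  have hK : ((↑s : Set V)ᶜ).Nonempty := by
    rw [nonempty_compl, Ne, Finset.coe_eq_univ]
    rintro rfl
    rw [Finset.card_univ] at hsc
    omega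
  have hD := G.two_pow_le_ncard_disconnectedSets hK hs (by rwa [hn, hsc])
  rw [hn, hsc] at hD
  rw [Nat.sub_add_cancel hn0] at hH
  have := Nat.one_le_two_pow (n := n - 1 - c)
  omega
end
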